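/- arXiv:1812.05880 — 2 statements merged into one kernel-verified Lean document; each statement's English description precedes it below -/
import Mathlib

section
/- Let Γ be a finite simple undirected graph with at least 12 vertices, with 1 ≤ |EΓ| ≤ 2|VΓ| + 8 edges, and with maximal valency at most 8. Then either there exist distinct vertices v₁, v₂, v₃, v₄ such that {v₁,v₂} is an edge of Γ but {v₂,v₃}, {v₃,v₄}, {v₄,v₁} are not edges of Γ, or |VΓ| = 12 and Γ is isomorphic to one of K_{4,8}, K₆ ∪ K₆, or K₅ ∪ K₇. -/
/-!
Let `H = Γᶜ`. The forbidden configuration is exactly a path `v₂ v₃ v₄ v₁` in `H` whose ends are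
not adjacent in `H`, so its absence says that every path on four vertices of `H` closes to a
4-cycle. Such a graph is either a disjoint union of cliques or contains a complete bipartite
connected component. The degree bound makes every `H`-degree at least `|V| - 9`, and the edge
bound yields a vertex of `H`-degree at least `|V| - 6`; counting vertices then leaves room only
for two blocks: `H = K_{s,t}`, so `Γ = K_s ∪ K_t`, or `H = K_p ∪ K_q`, so `Γ = K_{p,q}`. The
edge bound finally pins down the block sizes.
-/

open Finset

theorem eq_six_six_or_five_seven_or_seven_five_of_le {s t : ℕ} (hs : 3 ≤ s) (ht : 3 ≤ t)
    (hst : 12 ≤ s + t) (h : s * (s - 1) + t * (t - 1) ≤ 4 * (s + t) + 16) :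
    s = 6 ∧ t = 6 ∨ s = 5 ∧ t = 7 ∨ s = 7 ∧ t = 5 := by
  obtain ⟨s, rfl⟩ : ∃ k, s = k + 1 := ⟨s - 1, by omega⟩
  obtain ⟨t, rfl⟩ : ∃ k, t = k + 1 := ⟨t - 1, by omega⟩
  simp only [Nat.add_sub_cancel] at h
  have : s ≤ 6 := by nlinarith
  have : t ≤ 6 := by nlinarith
  interval_cases s <;> interval_cases t <;> omega

theorem eq_eight_and_eq_four_of_le {p q : ℕ} (hp : 7 ≤ p) (hq : 4 ≤ q) (hpq : 12 ≤ p + q)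
    (h : q * p ≤ 2 * (q + p) + 8) : p = 8 ∧ q = 4 := by
  have : q ≤ 4 := by nlinarith
  have : p ≤ 8 := by nlinarith
  omega

namespace SimpleGraph

variable {V : Type*} {G H : SimpleGraph V} {a b c u v w x y : V}

def P3Closed (H : SimpleGraph V) : Prop :=
  ∀ ⦃x y z : V⦄, x ≠ z → H.Adj x y → H.Adj y z → H.Adj x z

def P4Closed (H : SimpleGraph V) : Prop :=
  ∀ ⦃w x y z : V⦄, w ≠ y → x ≠ z → w ≠ z → H.Adj w x → H.Adj x y → H.Adj y z → H.Adj w z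

theorem p4Closed_compl_of_not_exists
    (h : ¬∃ v₁ v₂ v₃ v₄ : V, v₁ ≠ v₂ ∧ v₁ ≠ v₃ ∧ v₁ ≠ v₄ ∧ v₂ ≠ v₃ ∧ v₂ ≠ v₄ ∧ v₃ ≠ v₄ ∧
      G.Adj v₁ v₂ ∧ ¬G.Adj v₂ v₃ ∧ ¬G.Adj v₃ v₄ ∧ ¬G.Adj v₄ v₁) :
    Gᶜ.P4Closed := by
  intro w x y z hwy hxz hwz hwx hxy hyz
  by_contra hwz'
  rw [compl_adj] at hwx hxy hyz hwz'
  exact h ⟨z, w, x, y, hwz.symm, hxz.symm, hyz.1.symm, hwx.1, hwy, hxy.1,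
    (of_not_not (not_and.1 hwz' hwz)).symm, hwx.2, hxy.2, hyz.2⟩

namespace P4Closed

theorem neighborSet_subset (hH : H.P4Closed) (hab : a ≠ b) (hnab : ¬H.Adj a b)
    (hac : H.Adj a c) (hcb : H.Adj c b) : H.neighborSet a ⊆ H.neighborSet b := by
  intro x (hax : H.Adj a x)
  obtain rfl | hxc := eq_or_ne x c
  · exact hcb.symm
  · exact (hH hxc hab (by rintro rfl; exact hnab hax) hax.symm hac hcb).symm

theorem neighborSet_eq (hH : H.P4Closed) (hab : a ≠ b) (hnab : ¬H.Adj a b)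
    (hac : H.Adj a c) (hcb : H.Adj c b) : H.neighborSet a = H.neighborSet b :=
  (hH.neighborSet_subset hab hnab hac hcb).antisymm
    (hH.neighborSet_subset hab.symm (fun h => hnab h.symm) hcb.symm hac.symm)

theorem isIndepSet_neighborSet (hH : H.P4Closed) (hab : a ≠ b) (hnab : ¬H.Adj a b)
    (hac : H.Adj a c) (hcb : H.Adj c b) : H.IsIndepSet (H.neighborSet a) := by
  intro x (hax : H.Adj a x) y (hay : H.Adj a y) _ hxy
  have hby : H.Adj b y := hH.neighborSet_subset hab hnab hac hcb hay
  exact hnab (hH hay.ne (by rintro rfl; exact hnab hax) hab hax hxy hby.symm)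

theorem neighborSet_eq_of_adj_left (hH : H.P4Closed) (hab : a ≠ b) (hnab : ¬H.Adj a b)
    (hac : H.Adj a c) (hcb : H.Adj c b) (hax : H.Adj a x) :
    H.neighborSet x = H.neighborSet c := by
  obtain rfl | hxc := eq_or_ne x c
  · rfl
  · exact hH.neighborSet_eq hxc (hH.isIndepSet_neighborSet hab hnab hac hcb hax hac hxc)
      hax.symm hac

theorem neighborSet_eq_of_adj_right (hH : H.P4Closed) (hab : a ≠ b) (hnab : ¬H.Adj a b)
    (hac : H.Adj a c) (hcb : H.Adj c b) (hcy : H.Adj c y) :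
    H.neighborSet y = H.neighborSet a := by
  obtain rfl | hya := eq_or_ne y a
  · rfl
  · have hnya : ¬H.Adj y a := fun hay =>
      hH.isIndepSet_neighborSet hab hnab hac hcb hay.symm hac hcy.ne' hcy.symm
    exact hH.neighborSet_eq hya hnya hcy.symm hac.symm

end P4Closed

theorem P3Closed.exists_ne_not_adj (hH : H.P3Closed)
    (hxy : x ≠ y) (hnxy : ¬H.Adj x y) (v : V) : ∃ b, v ≠ b ∧ ¬H.Adj v b := by
  by_contra! h
  obtain rfl | hvx := eq_or_ne v x
  · exact hnxy (h y hxy)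
  obtain rfl | hvy := eq_or_ne v y
  · exact hnxy (h x hxy.symm).symm
  exact hnxy (hH hxy (h x hvx).symm (h y hvy))

variable {X : Finset V}

theorem adj_iff_ne_and_mem_iff_of_compl
    (h : ∀ u w, Gᶜ.Adj u w ↔ ¬(u ∈ X ↔ w ∈ X)) (u w : V) :
    G.Adj u w ↔ u ≠ w ∧ (u ∈ X ↔ w ∈ X) := by
  have := h u w
  rw [compl_adj] at this
  obtain rfl | huw := eq_or_ne u w
  · simp
  · tauto

theorem adj_iff_not_mem_iff_of_compl
    (h : ∀ u w, Gᶜ.Adj u w ↔ u ≠ w ∧ (u ∈ X ↔ w ∈ X)) (u w : V) :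
    G.Adj u w ↔ ¬(u ∈ X ↔ w ∈ X) := by
  have := h u w
  rw [compl_adj] at this
  obtain rfl | huw := eq_or_ne u w
  · simp
  · tauto

section Finite

variable [Fintype V]

theorem exists_card_mul_degree_le_two_mul_card_edgeFinset [DecidableRel G.Adj] [Nonempty V] :
    ∃ v, Fintype.card V * G.degree v ≤ 2 * #G.edgeFinset := by
  obtain ⟨v, hv⟩ := G.exists_minimal_degree_vertex
  refine ⟨v, ?_⟩
  rw [← hv, ← sum_degrees_eq_twice_card_edges, ← card_univ, ← smul_eq_mul]
  exact card_nsmul_le_sum _ _ _ fun u _ => G.minDegree_le_degree u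

variable [DecidableEq V]

theorem exists_equiv_sum_fin {s t : ℕ} (X : Finset V) (hs : #X = s) (ht : #Xᶜ = t) :
    ∃ e : V ≃ Fin s ⊕ Fin t, ∀ v, (e v).isLeft ↔ v ∈ X :=
  ⟨(Equiv.sumCompl (· ∈ X)).symm.trans <| Equiv.sumCongr
      (Fintype.equivFinOfCardEq (by simpa using hs))
      (Fintype.equivFinOfCardEq (by simpa [card_compl] using ht)),
    fun v => by by_cases hv : v ∈ X <;> simp [hv]⟩

theorem nonempty_iso_sum_top_of_adj_iff {s t : ℕ} (hs : #X = s) (ht : #Xᶜ = t)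
    (h : ∀ u w, G.Adj u w ↔ u ≠ w ∧ (u ∈ X ↔ w ∈ X)) :
    Nonempty (G ≃g (⊤ : SimpleGraph (Fin s)) ⊕g (⊤ : SimpleGraph (Fin t))) := by
  obtain ⟨e, he⟩ := exists_equiv_sum_fin X hs ht
  refine ⟨⟨e, fun {u w} => ?_⟩⟩
  rw [h, ← e.injective.ne_iff, ← he u, ← he w]
  generalize e u = p, e w = q
  cases p <;> cases q <;> simp

theorem nonempty_iso_completeBipartiteGraph_of_adj_iff {s t : ℕ} (hs : #X = s)
    (ht : #Xᶜ = t) (h : ∀ u w, G.Adj u w ↔ ¬(u ∈ X ↔ w ∈ X)) :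
    Nonempty (G ≃g completeBipartiteGraph (Fin s) (Fin t)) := by
  obtain ⟨e, he⟩ := exists_equiv_sum_fin X hs ht
  refine ⟨⟨e, fun {u w} => ?_⟩⟩
  rw [h, ← he u, ← he w]
  generalize e u = p, e w = q
  cases p <;> cases q <;> simp

variable [DecidableRel G.Adj]

theorem two_mul_card_edgeFinset_eq_of_degree_eq (X : Finset V) {d₁ d₂ : ℕ}
    (h₁ : ∀ u ∈ X, G.degree u = d₁) (h₂ : ∀ u ∈ Xᶜ, G.degree u = d₂) :
    2 * #G.edgeFinset = #X * d₁ + #Xᶜ * d₂ := by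
  rw [← sum_degrees_eq_twice_card_edges, ← sum_add_sum_compl X, sum_const_nat h₁,
    sum_const_nat h₂]

theorem degree_eq_card_sub_one_of_adj_iff (h : ∀ u w, G.Adj u w ↔ u ≠ w ∧ (u ∈ X ↔ w ∈ X))
    (hu : u ∈ X) : G.degree u = #X - 1 := by
  rw [← card_neighborFinset_eq_degree, ← card_erase_of_mem hu]
  congr 1
  ext w
  simp [h, hu, eq_comm]

theorem degree_eq_card_compl_of_adj_iff (h : ∀ u w, G.Adj u w ↔ ¬(u ∈ X ↔ w ∈ X))
    (hu : u ∈ X) : G.degree u = #Xᶜ := by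
  rw [← card_neighborFinset_eq_degree]
  congr 1
  ext w
  simp [h, hu]

theorem two_mul_card_edgeFinset_of_adj_iff_ne_and_mem_iff
    (h : ∀ u w, G.Adj u w ↔ u ≠ w ∧ (u ∈ X ↔ w ∈ X)) :
    2 * #G.edgeFinset = #X * (#X - 1) + #Xᶜ * (#Xᶜ - 1) := by
  have hc : ∀ u w, G.Adj u w ↔ u ≠ w ∧ (u ∈ Xᶜ ↔ w ∈ Xᶜ) := by simp [h, not_iff_not]
  exact two_mul_card_edgeFinset_eq_of_degree_eq X (fun _ => degree_eq_card_sub_one_of_adj_iff h)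
    (fun _ => degree_eq_card_sub_one_of_adj_iff hc)

theorem card_edgeFinset_of_adj_iff_not_mem_iff (h : ∀ u w, G.Adj u w ↔ ¬(u ∈ X ↔ w ∈ X)) :
    #G.edgeFinset = #X * #Xᶜ := by
  have hc : ∀ u w, G.Adj u w ↔ ¬(u ∈ Xᶜ ↔ w ∈ Xᶜ) := by simp [h, not_iff_not]
  have := two_mul_card_edgeFinset_eq_of_degree_eq X (fun _ => degree_eq_card_compl_of_adj_iff h)
    (fun _ => degree_eq_card_compl_of_adj_iff hc)
  rw [compl_compl] at this
  linarith [mul_comm #X #Xᶜ]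

variable [DecidableRel H.Adj]

theorem card_insert_neighborFinset (u : V) :
    #(insert u (H.neighborFinset u)) = H.degree u + 1 := by
  rw [card_insert_of_notMem (H.notMem_neighborFinset_self u), card_neighborFinset_eq_degree]

theorem eq_compl_of_forall_neighborFinset_eq {X Y : Finset V}
    (hX : ∀ x ∈ X, H.neighborFinset x = Y) (hY : ∀ y ∈ Y, H.neighborFinset y = X)
    (hXne : X.Nonempty) (hV : 12 ≤ Fintype.card V)
    (hδ : ∀ u, Fintype.card V ≤ H.degree u + 9) (hv : Fintype.card V ≤ H.degree v + 6) :
    Y = Xᶜ := by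
  have hdegX : ∀ x ∈ X, H.degree x = #Y := fun x hx => by
    rw [← card_neighborFinset_eq_degree, hX x hx]
  have hdegY : ∀ y ∈ Y, H.degree y = #X := fun y hy => by
    rw [← card_neighborFinset_eq_degree, hY y hy]
  obtain ⟨x₀, hx₀⟩ := hXne
  have hYcard := hdegX x₀ hx₀ ▸ hδ x₀
  obtain ⟨y₀, hy₀⟩ : Y.Nonempty := card_pos.1 (by omega)
  have hXcard := hdegY y₀ hy₀ ▸ hδ y₀
  have hdisj : Disjoint X Y := Finset.disjoint_left.2 fun {z} hzX hzY =>
    H.notMem_neighborFinset_self z (hX z hzX ▸ hzY)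
  -- The neighbours of a vertex outside `X ∪ Y` lie outside `X ∪ Y`, so the rest would be large
  -- too, leaving no room for the vertex `v` of large degree.
  have hcover : ∀ u, u ∈ X ∪ Y := by
    by_contra! ⟨u, hu⟩
    set R := (X ∪ Y)ᶜ
    have hdegR : ∀ w ∈ R, H.degree w < #R := by
      intro w hw
      have hsub : H.neighborFinset w ⊆ R.erase w := by
        intro z hz
        rw [mem_neighborFinset] at hz
        have hwz : w ∈ H.neighborFinset z := (H.mem_neighborFinset z w).2 hz.symm
        simp only [R, mem_erase, mem_compl, mem_union] at hw ⊢
        refine ⟨hz.ne', fun hzXY => hw ?_⟩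
        rcases hzXY with hzX | hzY
        · exact Or.inr (hX z hzX ▸ hwz)
        · exact Or.inl (hY z hzY ▸ hwz)
      rw [← card_neighborFinset_eq_degree]
      exact (card_le_card hsub).trans_lt (card_erase_lt_of_mem hw)
    have hRcard := hdegR u (mem_compl.2 hu)
    have hu9 := hδ u
    have hcard : #X + #Y + #R = Fintype.card V := by
      rw [← card_union_of_disjoint hdisj, card_add_card_compl]
    by_cases hvX : v ∈ X
    · have := hdegX v hvX; omega
    by_cases hvY : v ∈ Y
    · have := hdegY v hvY; omega
    · have := hdegR v (by simp [R, hvX, hvY]); omega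
  ext w
  exact ⟨fun hw => mem_compl.2 (Finset.disjoint_right.1 hdisj hw),
    fun hw => (mem_union.1 (hcover w)).resolve_left (mem_compl.1 hw)⟩

theorem card_eq_twelve_and_nonempty_iso_sum_top (hP4 : Gᶜ.P4Closed) (hab : a ≠ b)
    (hnab : ¬Gᶜ.Adj a b) (hac : Gᶜ.Adj a c) (hcb : Gᶜ.Adj c b) (hV : 12 ≤ Fintype.card V)
    (hE : #G.edgeFinset ≤ 2 * Fintype.card V + 8)
    (hδ : ∀ u, Fintype.card V ≤ Gᶜ.degree u + 9) (hv : Fintype.card V ≤ Gᶜ.degree v + 6) :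
    Fintype.card V = 12 ∧
      (Nonempty (G ≃g (⊤ : SimpleGraph (Fin 6)) ⊕g (⊤ : SimpleGraph (Fin 6))) ∨
       Nonempty (G ≃g (⊤ : SimpleGraph (Fin 5)) ⊕g (⊤ : SimpleGraph (Fin 7)))) := by
  set X := Gᶜ.neighborFinset a
  have hX : ∀ x ∈ X, Gᶜ.neighborFinset x = Gᶜ.neighborFinset c := fun x hx =>
    Set.toFinset_congr <| hP4.neighborSet_eq_of_adj_left hab hnab hac hcb <|
      (mem_neighborFinset ..).1 hx
  have hY : ∀ y ∈ Gᶜ.neighborFinset c, Gᶜ.neighborFinset y = X := fun y hy =>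
    Set.toFinset_congr <| hP4.neighborSet_eq_of_adj_right hab hnab hac hcb <|
      (mem_neighborFinset ..).1 hy
  have hXc := eq_compl_of_forall_neighborFinset_eq hX hY
    ⟨c, (mem_neighborFinset ..).2 hac⟩ hV hδ hv
  have hadj : ∀ u w, G.Adj u w ↔ u ≠ w ∧ (u ∈ X ↔ w ∈ X) :=
    adj_iff_ne_and_mem_iff_of_compl fun u w => by
      by_cases hu : u ∈ X
      · rw [← mem_neighborFinset, hX u hu, hXc, mem_compl]
        tauto
      · rw [← mem_neighborFinset, hY u (hXc ▸ mem_compl.2 hu)]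
        tauto
  have hsum := two_mul_card_edgeFinset_of_adj_iff_ne_and_mem_iff hadj
  have hn := card_add_card_compl X
  have hs : Fintype.card V ≤ #X + 9 := by
    have := hδ a
    rwa [← card_neighborFinset_eq_degree] at this
  have ht : Fintype.card V ≤ #Xᶜ + 9 := by
    have := hδ c
    rwa [← card_neighborFinset_eq_degree, hXc] at this
  obtain h | h | h := eq_six_six_or_five_seven_or_seven_five_of_le (s := #X) (t := #Xᶜ)
    (by omega) (by omega) (by omega) (by omega)
  · exact ⟨by omega, Or.inl (nonempty_iso_sum_top_of_adj_iff h.1 h.2 hadj)⟩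
  · exact ⟨by omega, Or.inr (nonempty_iso_sum_top_of_adj_iff h.1 h.2 hadj)⟩
  · obtain ⟨e⟩ := nonempty_iso_sum_top_of_adj_iff h.1 h.2 hadj
    exact ⟨by omega, Or.inr ⟨e.trans Iso.sumComm⟩⟩

theorem P3Closed.disjoint_insert_neighborFinset (hH : H.P3Closed)
    (huw : u ≠ w) (hnuw : ¬H.Adj u w) :
    Disjoint (insert u (H.neighborFinset u)) (insert w (H.neighborFinset w)) := by
  simp only [Finset.disjoint_left, mem_insert, mem_neighborFinset]
  rintro z (rfl | huz) (rfl | hwz)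
  · exact huw rfl
  · exact hnuw hwz.symm
  · exact hnuw huz
  · exact hnuw (hH huw huz hwz.symm)

theorem P3Closed.adj_of_mem_insert_neighborFinset (hH : H.P3Closed)
    (hx : x ∈ insert u (H.neighborFinset u)) (hy : y ∈ insert u (H.neighborFinset u))
    (hxy : x ≠ y) : H.Adj x y := by
  simp only [mem_insert, mem_neighborFinset] at hx hy
  rcases hx with rfl | hux <;> rcases hy with rfl | huy
  · exact absurd rfl hxy
  · exact huy
  · exact hux.symm
  · exact hH hxy hux.symm huy

theorem P3Closed.mem_insert_neighborFinset_of_adj (hH : H.P3Closed)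
    (hx : x ∈ insert u (H.neighborFinset u)) (hxy : H.Adj x y) :
    y ∈ insert u (H.neighborFinset u) := by
  simp only [mem_insert, mem_neighborFinset] at hx ⊢
  rcases hx with rfl | hux
  · exact Or.inr hxy
  · obtain rfl | huy := eq_or_ne u y
    · exact Or.inl rfl
    · exact Or.inr (hH huy hux hxy)

theorem P3Closed.compl_insert_neighborFinset_eq (hH : H.P3Closed)
    (hvb : v ≠ b) (hnvb : ¬H.Adj v b) (hV : 12 ≤ Fintype.card V)
    (hδ : ∀ u, Fintype.card V ≤ H.degree u + 9) (hv : Fintype.card V ≤ H.degree v + 6) :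
    (insert b (H.neighborFinset b))ᶜ = insert v (H.neighborFinset v) := by
  have hdisj := hH.disjoint_insert_neighborFinset hvb hnvb
  have hcover : ∀ w, w ∈ insert v (H.neighborFinset v) ∪ insert b (H.neighborFinset b) := by
    by_contra! ⟨w, hw⟩
    simp only [mem_union, mem_insert, mem_neighborFinset, not_or] at hw
    obtain ⟨⟨hwv, hvw⟩, hwb, hbw⟩ := hw
    have hdisj' := disjoint_union_left.2 ⟨hH.disjoint_insert_neighborFinset (Ne.symm hwv) hvw,
      hH.disjoint_insert_neighborFinset (Ne.symm hwb) hbw⟩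
    have := card_le_univ (insert v (H.neighborFinset v) ∪ insert b (H.neighborFinset b) ∪
      insert w (H.neighborFinset w))
    rw [card_union_of_disjoint hdisj', card_union_of_disjoint hdisj, card_insert_neighborFinset,
      card_insert_neighborFinset, card_insert_neighborFinset] at this
    have := hδ b
    have := hδ w
    omega
  ext w
  rw [mem_compl]
  exact ⟨fun hw => (mem_union.1 (hcover w)).resolve_right hw,
    fun hw => Finset.disjoint_left.1 hdisj hw⟩

theorem P3Closed.adj_iff_of_compl_insert_neighborFinset_eq (hH : H.P3Closed)
    (h : (insert b (H.neighborFinset b))ᶜ = insert v (H.neighborFinset v)) (x y : V) :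
    H.Adj x y ↔ x ≠ y ∧
      (x ∈ insert b (H.neighborFinset b) ↔ y ∈ insert b (H.neighborFinset b)) := by
  refine ⟨fun hxy => ⟨hxy.ne, fun hx => hH.mem_insert_neighborFinset_of_adj hx hxy,
    fun hy => hH.mem_insert_neighborFinset_of_adj hy hxy.symm⟩, fun ⟨hne, hiff⟩ => ?_⟩
  by_cases hx : x ∈ insert b (H.neighborFinset b)
  · exact hH.adj_of_mem_insert_neighborFinset hx (hiff.1 hx) hne
  · exact hH.adj_of_mem_insert_neighborFinset (h ▸ mem_compl.2 hx)
      (h ▸ mem_compl.2 (mt hiff.2 hx)) hne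

theorem card_eq_twelve_and_nonempty_iso_completeBipartiteGraph
    (hP3 : Gᶜ.P3Closed)
    (hE₁ : 1 ≤ #G.edgeFinset) (hV : 12 ≤ Fintype.card V)
    (hE₂ : #G.edgeFinset ≤ 2 * Fintype.card V + 8)
    (hδ : ∀ u, Fintype.card V ≤ Gᶜ.degree u + 9) (hv : Fintype.card V ≤ Gᶜ.degree v + 6) :
    Fintype.card V = 12 ∧ Nonempty (G ≃g completeBipartiteGraph (Fin 4) (Fin 8)) := by
  obtain ⟨x, y, hxy⟩ := ne_bot_iff_exists_adj.1 (edgeFinset_nonempty.1 (card_pos.1 hE₁))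
  obtain ⟨b, hvb, hnvb⟩ := hP3.exists_ne_not_adj hxy.ne
    (fun h => ((compl_adj G x y).1 h).2 hxy) v
  set B := insert b (Gᶜ.neighborFinset b)
  have hBc := hP3.compl_insert_neighborFinset_eq hvb hnvb hV hδ hv
  have hadj : ∀ u w, G.Adj u w ↔ ¬(u ∈ B ↔ w ∈ B) :=
    adj_iff_not_mem_iff_of_compl (hP3.adj_iff_of_compl_insert_neighborFinset_eq hBc)
  have hE := card_edgeFinset_of_adj_iff_not_mem_iff hadj
  have hq : Fintype.card V ≤ #B + 8 := by
    have := hδ b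
    rw [card_insert_neighborFinset]
    omega
  have hp : Fintype.card V ≤ #Bᶜ + 5 := by
    have := hv
    rw [hBc, card_insert_neighborFinset]
    omega
  have hn := card_add_card_compl B
  obtain ⟨h8, h4⟩ := eq_eight_and_eq_four_of_le (p := #Bᶜ) (q := #B)
    (by omega) (by omega) (by omega) (by omega)
  exact ⟨by omega, nonempty_iso_completeBipartiteGraph_of_adj_iff h4 h8 hadj⟩

end Finite

end SimpleGraph

/-- Let `Γ` be a finite simple graph with at least 12 vertices, between 1 and
`2|V| + 8` edges, and maximal valency at most 8. Then either there are distinct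
vertices `v₁, v₂, v₃, v₄` with `v₁v₂` an edge and `v₂v₃, v₃v₄, v₄v₁` non-edges,
or `|V| = 12` and `Γ` is `K_{4,8}`, `K₆ ∪ K₆`, or `K₅ ∪ K₇`. -/
theorem graph_lemma
    {V : Type*} [Fintype V] [DecidableEq V]
    (Γ : SimpleGraph V) [DecidableRel Γ.Adj]
    (hV : 12 ≤ Fintype.card V)
    (hE1 : 1 ≤ Γ.edgeFinset.card)
    (hE2 : Γ.edgeFinset.card ≤ 2 * Fintype.card V + 8)
    (hdeg : ∀ v : V, Γ.degree v ≤ 8) :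
    (∃ v₁ v₂ v₃ v₄ : V,
        v₁ ≠ v₂ ∧ v₁ ≠ v₃ ∧ v₁ ≠ v₄ ∧ v₂ ≠ v₃ ∧ v₂ ≠ v₄ ∧ v₃ ≠ v₄ ∧
        Γ.Adj v₁ v₂ ∧ ¬Γ.Adj v₂ v₃ ∧ ¬Γ.Adj v₃ v₄ ∧ ¬Γ.Adj v₄ v₁) ∨
    (Fintype.card V = 12 ∧
      (Nonempty (Γ ≃g completeBipartiteGraph (Fin 4) (Fin 8)) ∨
       Nonempty (Γ ≃g ((⊤ : SimpleGraph (Fin 6)) ⊕g (⊤ : SimpleGraph (Fin 6)))) ∨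
       Nonempty (Γ ≃g ((⊤ : SimpleGraph (Fin 5)) ⊕g (⊤ : SimpleGraph (Fin 7)))))) := by
  refine or_iff_not_imp_left.2 fun hP => ?_
  have : Nonempty V := Fintype.card_pos_iff.1 (by omega)
  obtain ⟨v, hv⟩ := Γ.exists_card_mul_degree_le_two_mul_card_edgeFinset
  have hv5 : Γ.degree v ≤ 5 := by nlinarith
  have hδ : ∀ u, Fintype.card V ≤ Γᶜ.degree u + 9 := fun u => by
    have := Γ.degree_compl u
    have := Γ.degree_lt_card_verts u
    have := hdeg u
    omega
  have hv' : Fintype.card V ≤ Γᶜ.degree v + 6 := by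
    have := Γ.degree_compl v
    have := Γ.degree_lt_card_verts v
    omega
  by_cases hP3 : Γᶜ.P3Closed
  · obtain ⟨h12, hiso⟩ :=
      Γ.card_eq_twelve_and_nonempty_iso_completeBipartiteGraph hP3 hE1 hV hE2 hδ hv'
    exact ⟨h12, Or.inl hiso⟩
  · rw [SimpleGraph.P3Closed] at hP3
    push Not at hP3
    obtain ⟨a, c, b, hab, hac, hcb, hnab⟩ := hP3
    obtain ⟨h12, hiso⟩ := Γ.card_eq_twelve_and_nonempty_iso_sum_top
      (SimpleGraph.p4Closed_compl_of_not_exists hP) hab hnab hac hcb hV hE2 hδ hv'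
    exact ⟨h12, Or.inr hiso⟩
end

section
/- Let G be an almost quasisimple group, q a prime power, and V a faithful irreducible F_q G-module. If G has no regular orbits on V, then dim_{F_q}(V) ≤ r(G)·log_q|G|, where r(G) = max{r(g) : g ∈ G \ Z(G)}. -/
/-!
Without regular orbits `V` is the union of the fixed spaces `C_V(g)`, `g ≠ 1`, so
`q ^ dim V ≤ |G| · q ^ k` with `k` the largest `dim C_V(g)`. A central `g ≠ 1` fixes no nonzero
vector, by irreducibility and faithfulness. For noncentral `g`, some `r(g)` conjugates of `g`
generate a subgroup `H` whose image in `G/Z(G)` contains `T`; then `H Z(G)` contains the preimage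
`N` of `T`, so `H ⊇ [N, N]`, a nontrivial normal subgroup (as `T` is nonabelian) and hence without
nonzero fixed vectors. So the `r(g)` conjugate fixed spaces meet in `0`, which gives
`dim V ≤ r(g) · codim C_V(g)`, and combined with the count, `q ^ dim V ≤ |G| ^ r(G)`.
-/

/-- `rElt T x` is the minimal number `r` of `T`-conjugates of `x` that generate the
subgroup `⟨T, x⟩`. -/
noncomputable def rElt {Q : Type*} [Group Q] (T : Subgroup Q) (x : Q) : ℕ :=
  sInf {m : ℕ | ∃ c : Fin m → Q,
    (∀ i, ∃ t ∈ T, c i = t * x * t⁻¹) ∧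
    Subgroup.closure (Set.range c) = T ⊔ Subgroup.zpowers x}

/-- `rGroup G T = max{rElt T ḡ : g ∈ G \ Z(G)}`. -/
noncomputable def rGroup (G : Type*) [Group G] (T : Subgroup (G ⧸ Subgroup.center G)) : ℕ :=
  sSup {m : ℕ | ∃ g : G, g ∉ Subgroup.center G ∧ m = rElt T ((g : G ⧸ Subgroup.center G))}

open Subgroup
open scoped commutatorElement

section Commutator

variable {G : Type*} [Group G]

theorem commutatorElement_mul_mem_center {z₁ z₂ : G} (hz₁ : z₁ ∈ center G)
    (hz₂ : z₂ ∈ center G) (a b : G) : ⁅a * z₁, b * z₂⁆ = ⁅a, b⁆ := by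
  have h₁ : ⁅z₁, b * z₂⁆ = 1 := commutatorElement_eq_one_iff_commute.mpr
    (mem_center_iff.mp hz₁ _).symm
  have h₂ : ⁅a, z₂⁆ = 1 := commutatorElement_eq_one_iff_commute.mpr
    (mem_center_iff.mp hz₂ _)
  rw [commutatorElement_mul_left_eq_conj_mul, h₁, commutatorElement_mul_right_eq_mul_conj, h₂]
  group

theorem commutator_le_of_le_sup_center {N H : Subgroup G} (hN : N ≤ H ⊔ center G) :
    ⁅N, N⁆ ≤ H := by
  rw [commutator_le]
  intro a ha b hb
  obtain ⟨h₁, hh₁, z₁, hz₁, rfl⟩ := mem_sup_of_normal_right.mp (hN ha)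
  obtain ⟨h₂, hh₂, z₂, hz₂, rfl⟩ := mem_sup_of_normal_right.mp (hN hb)
  rw [commutatorElement_mul_mem_center hz₁ hz₂, commutatorElement_def]
  exact mul_mem (mul_mem (mul_mem hh₁ hh₂) (inv_mem hh₁)) (inv_mem hh₂)

theorem commutator_ne_bot_of_centralizer_eq_bot {T : Subgroup G} [Nontrivial T]
    (hT : centralizer (T : Set G) = ⊥) : ⁅T, T⁆ ≠ ⊥ := by
  intro h
  obtain ⟨t, htT, ht⟩ := (nontrivial_iff_exists_ne_one T).mp ‹_›
  refine ht (mem_bot.mp (hT ▸ mem_centralizer_iff.mpr fun s hs => ?_))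
  exact (commutatorElement_eq_one_iff_mul_comm.mp
    (mem_bot.mp (h ▸ commutator_mem_commutator hs htT)))

theorem commutator_comap_le_of_le_map {T : Subgroup (G ⧸ center G)} {H : Subgroup G}
    (hH : T ≤ H.map (QuotientGroup.mk' (center G))) :
    ⁅T.comap (QuotientGroup.mk' (center G)), T.comap (QuotientGroup.mk' (center G))⁆ ≤ H := by
  refine commutator_le_of_le_sup_center ?_
  calc T.comap _ ≤ (H.map _).comap _ := comap_mono hH
    _ = H ⊔ center G := by rw [comap_map_eq, QuotientGroup.ker_mk']

theorem commutator_comap_ne_bot {G' : Type*} [Group G'] {f : G →* G'}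
    (hf : Function.Surjective f) {T : Subgroup G'} (hT : ⁅T, T⁆ ≠ ⊥) :
    ⁅T.comap f, T.comap f⁆ ≠ ⊥ := by
  intro h
  apply hT
  have := congrArg (map f) h
  rwa [map_commutator, map_comap_eq_self_of_surjective hf, Subgroup.map_bot] at this

end Commutator

section ConjugateGenerators

variable {Q : Type*} [Group Q] (T : Subgroup Q)

theorem conj_mem_closure_conj {x : Q} {t : Q} (ht : t ∈ T) {h : Q}
    (hh : h ∈ closure {y | ∃ s ∈ T, y = s * x * s⁻¹}) :
    t * h * t⁻¹ ∈ closure {y | ∃ s ∈ T, y = s * x * s⁻¹} := by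
  induction hh using closure_induction with
  | mem y hy =>
    obtain ⟨s, hs, rfl⟩ := hy
    exact subset_closure ⟨t * s, mul_mem ht hs, by group⟩
  | one => simp
  | mul a b _ _ ha hb => simpa [mul_assoc] using mul_mem ha hb
  | inv a _ ha => simpa [mul_assoc] using inv_mem ha

variable [T.Normal] [IsSimpleGroup T]

theorem closure_conj_eq_sup (hT : centralizer (T : Set Q) = ⊥) {x : Q} (hx : x ≠ 1) :
    closure {y | ∃ t ∈ T, y = t * x * t⁻¹} = T ⊔ zpowers x := by
  set H := closure {y | ∃ t ∈ T, y = t * x * t⁻¹}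
  have hxH : x ∈ H := subset_closure ⟨1, one_mem T, by group⟩
  have hHT : (H.subgroupOf T).Normal :=
    ⟨fun n hn t => by simpa [mem_subgroupOf] using conj_mem_closure_conj T t.2 hn⟩
  refine le_antisymm ?_ (sup_le ?_ (zpowers_le.mpr hxH))
  · refine closure_le _ |>.mpr ?_
    rintro - ⟨t, ht, rfl⟩
    exact mul_mem (mul_mem (mem_sup_left ht) (mem_sup_right (mem_zpowers x)))
      (inv_mem (mem_sup_left ht))
  rcases IsSimpleGroup.eq_bot_or_eq_top_of_normal _ hHT with hbot | htop
  · -- the commutators `⁅t, x⁆` lie in `H ⊓ T = ⊥`, so `x` centralizes `T`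
    refine absurd (mem_bot.mp (hT ▸ mem_centralizer_iff.mpr fun t ht => ?_)) hx
    have hcommH : ⁅t, x⁆ ∈ H := mul_mem (subset_closure ⟨t, ht, rfl⟩) (inv_mem hxH)
    have hcommT : ⁅t, x⁆ ∈ T := by
      simpa [commutatorElement_def, mul_assoc] using
        mul_mem ht (‹T.Normal›.conj_mem _ (inv_mem ht) x)
    exact commutatorElement_eq_one_iff_mul_comm.mp
      (disjoint_def.mp (subgroupOf_eq_bot.mp hbot) hcommH hcommT)
  · exact subgroupOf_eq_top.mp htop

variable [Finite Q]

theorem exists_conj_generators_card (hT : centralizer (T : Set Q) = ⊥) {x : Q} (hx : x ≠ 1) :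
    ∃ c : Fin (Nat.card T) → Q, (∀ i, ∃ t ∈ T, c i = t * x * t⁻¹) ∧
      closure (Set.range c) = T ⊔ zpowers x := by
  let e : T ≃ Fin (Nat.card T) := Finite.equivFin T
  refine ⟨fun i => (e.symm i : Q) * x * (e.symm i : Q)⁻¹,
    fun i => ⟨_, (e.symm i).2, rfl⟩, ?_⟩
  rw [← closure_conj_eq_sup T hT hx]
  congr 1
  ext y
  exact ⟨fun ⟨i, hi⟩ => ⟨_, (e.symm i).2, hi.symm⟩,
    fun ⟨t, ht, hy⟩ => ⟨e ⟨t, ht⟩, by simp [hy]⟩⟩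

theorem rElt_spec (hT : centralizer (T : Set Q) = ⊥) {x : Q} (hx : x ≠ 1) :
    ∃ c : Fin (rElt T x) → Q, (∀ i, ∃ t ∈ T, c i = t * x * t⁻¹) ∧
      closure (Set.range c) = T ⊔ zpowers x :=
  Nat.sInf_mem (s := {m | ∃ _ : Fin m → Q, _}) ⟨_, exists_conj_generators_card T hT hx⟩

theorem rElt_le_card (hT : centralizer (T : Set Q) = ⊥) {x : Q} (hx : x ≠ 1) :
    rElt T x ≤ Nat.card T :=
  Nat.sInf_le (exists_conj_generators_card T hT hx)

end ConjugateGenerators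

theorem rElt_le_rGroup {G : Type*} [Group G] [Finite G] {T : Subgroup (G ⧸ center G)}
    [T.Normal] [IsSimpleGroup T] (hT : centralizer (T : Set (G ⧸ center G)) = ⊥) {g : G}
    (hg : g ∉ center G) : rElt T (g : G ⧸ center G) ≤ rGroup G T := by
  refine le_csSup ⟨Nat.card T, ?_⟩ ⟨g, hg, rfl⟩
  rintro m ⟨g, hg, rfl⟩
  exact rElt_le_card T hT ((QuotientGroup.eq_one_iff g).not.mpr hg)

section FixedSubmodule

variable {G : Type*} [Group G] (F : Type*) [Field F] (V : Type*) [AddCommGroup V] [Module F V]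
  [DistribMulAction G V] [SMulCommClass G F V]

def fixedSubmodule (g : G) : Submodule F V where
  carrier := MulAction.fixedBy V g
  add_mem' ha hb := by simp_all [MulAction.mem_fixedBy, smul_add]
  zero_mem' := smul_zero g
  smul_mem' a v hv := by rw [MulAction.mem_fixedBy, smul_comm, hv]

variable {F V}

@[simp]
theorem mem_fixedSubmodule {g : G} {v : V} : v ∈ fixedSubmodule F V g ↔ g • v = v := Iff.rfl

theorem fixedSubmodule_conj (s g : G) :
    fixedSubmodule F V (s * g * s⁻¹) =
      (fixedSubmodule F V g).map (DistribMulAction.toLinearEquiv F V s : V →ₗ[F] V) := by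
  ext v
  simp only [mem_fixedSubmodule, Submodule.mem_map, LinearEquiv.coe_coe,
    DistribMulAction.toLinearEquiv_apply, mul_smul]
  constructor
  · intro hv
    exact ⟨s⁻¹ • v, (inv_smul_eq_iff.mpr hv.symm).symm, smul_inv_smul s v⟩
  · rintro ⟨w, hw, rfl⟩
    rw [inv_smul_smul, hw]

theorem finrank_fixedSubmodule_conj (s g : G) :
    Module.finrank F (fixedSubmodule F V (s * g * s⁻¹)) =
      Module.finrank F (fixedSubmodule F V g) := by
  rw [fixedSubmodule_conj]
  exact LinearEquiv.finrank_map_eq _ _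

/-- The common fixed space of a conjugation-stable set is a `G`-stable submodule. -/
theorem eq_zero_of_forall_smul_eq_self [FaithfulSMul G V]
    (hirr : ∀ U : Submodule F V, (∀ (g : G) (v : V), v ∈ U → g • v ∈ U) →
      U = ⊥ ∨ U = ⊤)
    {S : Set G} (hS : ∀ g, ∀ s ∈ S, g * s * g⁻¹ ∈ S) (hS1 : ∃ s ∈ S, s ≠ 1) {v : V}
    (hv : ∀ s ∈ S, s • v = v) : v = 0 := by
  set U := ⨅ s ∈ S, fixedSubmodule F V s
  have hmemU : ∀ w, w ∈ U ↔ ∀ s ∈ S, s • w = w := by simp [U, Submodule.mem_iInf]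
  have hUinv : ∀ (g : G) (w : V), w ∈ U → g • w ∈ U := by
    intro g w hw
    rw [hmemU] at hw ⊢
    intro s hs
    rw [← inv_smul_eq_iff, ← mul_smul, ← mul_smul, hw _ (by simpa using hS g⁻¹ s hs)]
  rcases hirr U hUinv with hbot | htop
  · simpa [hbot] using (hmemU v).mpr hv
  · obtain ⟨s, hs, hs1⟩ := hS1
    refine absurd (eq_of_smul_eq_smul (α := V) fun w => ?_) hs1
    rw [one_smul]
    exact (hmemU w).mp (htop ▸ Submodule.mem_top) s hs

theorem fixedSubmodule_eq_bot_of_mem_center [FaithfulSMul G V]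
    (hirr : ∀ U : Submodule F V, (∀ (g : G) (v : V), v ∈ U → g • v ∈ U) →
      U = ⊥ ∨ U = ⊤)
    {g : G} (hgZ : g ∈ center G) (hg : g ≠ 1) : fixedSubmodule F V g = ⊥ := by
  refine (Submodule.eq_bot_iff _).mpr fun v hv => eq_zero_of_forall_smul_eq_self hirr
    (S := {g}) (fun a s hs => ?_) ⟨g, rfl, hg⟩ (fun s hs => hs ▸ hv)
  rw [hs, mem_center_iff.mp hgZ a, mul_inv_cancel_right]
  rfl

end FixedSubmodule

theorem Submodule.finrank_le_finrank_inf_add_sum {K W ι : Type*} [DivisionRing K] [AddCommGroup W]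
    [Module K W] [FiniteDimensional K W] (s : Finset ι) (f : ι → Submodule K W) :
    Module.finrank K W ≤ Module.finrank K ↥(s.inf f) +
      ∑ i ∈ s, (Module.finrank K W - Module.finrank K (f i)) := by
  classical
  induction s using Finset.induction_on with
  | empty => rw [Finset.inf_empty, finrank_top]; exact Nat.le_add_right _ _
  | insert a s ha ih =>
    rw [Finset.inf_insert, Finset.sum_insert ha]
    have := Submodule.finrank_sup_add_finrank_inf_eq (f a) (s.inf f)
    have := Submodule.finrank_le (f a ⊔ s.inf f)
    have := Submodule.finrank_le (f a)
    omega

theorem MulAction.card_le_card_mul_of_forall_exists_fixed {G X : Type*} [Group G] [MulAction G X]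
    [Finite G] [Finite X] {m : ℕ} (hcover : ∀ x : X, ∃ g : G, g ≠ 1 ∧ g • x = x)
    (hm : ∀ g : G, g ≠ 1 → Nat.card (fixedBy X g) ≤ m) : Nat.card X ≤ Nat.card G * m := by
  have := Fintype.ofFinite {g : G // g ≠ 1}
  let f : (Σ g : {g : G // g ≠ 1}, fixedBy X (g : G)) → X := fun p => p.2
  have hf : Function.Surjective f := fun x =>
    let ⟨g, hg, hgx⟩ := hcover x
    ⟨⟨⟨g, hg⟩, ⟨x, hgx⟩⟩, rfl⟩
  calc Nat.card X ≤ Nat.card (Σ g : {g : G // g ≠ 1}, fixedBy X (g : G)) :=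
        Nat.card_le_card_of_surjective f hf
    _ = ∑ g : {g : G // g ≠ 1}, Nat.card (fixedBy X (g : G)) := Nat.card_sigma
    _ ≤ ∑ _g : {g : G // g ≠ 1}, m := Finset.sum_le_sum fun g _ => hm g g.2
    _ = Nat.card {g : G // g ≠ 1} * m := by simp [Nat.card_eq_fintype_card]
    _ ≤ Nat.card G * m := Nat.mul_le_mul_right _ (Finite.card_subtype_le _)

section NoRegularOrbit

variable {G : Type*} [Group G] {F : Type*} [Field F] {V : Type*} [AddCommGroup V]
  [Module F V] [FiniteDimensional F V] [DistribMulAction G V] [SMulCommClass G F V]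

theorem finrank_le_card_mul_of_inf_fixedSubmodule_conj_eq_bot {ι : Type*} [Fintype ι]
    (g : G) (s : ι → G)
    (h : Finset.univ.inf (fun i => fixedSubmodule F V (s i * g * (s i)⁻¹)) = ⊥) :
    Module.finrank F V ≤
      Fintype.card ι * (Module.finrank F V - Module.finrank F (fixedSubmodule F V g)) := by
  have := Submodule.finrank_le_finrank_inf_add_sum Finset.univ
    (fun i => fixedSubmodule F V (s i * g * (s i)⁻¹))
  rw [h, finrank_bot, zero_add] at this
  simpa [finrank_fixedSubmodule_conj] using this

theorem finrank_le_rElt_mul [Finite G] [FaithfulSMul G V]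
    (hirr : ∀ U : Submodule F V, (∀ (g : G) (v : V), v ∈ U → g • v ∈ U) →
      U = ⊥ ∨ U = ⊤)
    (T : Subgroup (G ⧸ center G)) [T.Normal] [IsSimpleGroup T]
    (hT : centralizer (T : Set (G ⧸ center G)) = ⊥) {g : G} (hg : g ∉ center G) :
    Module.finrank F V ≤
      rElt T (g : G ⧸ center G) *
        (Module.finrank F V - Module.finrank F (fixedSubmodule F V g)) := by
  set π := QuotientGroup.mk' (center G)
  have hx : (g : G ⧸ center G) ≠ 1 := (QuotientGroup.eq_one_iff g).not.mpr hg
  obtain ⟨c, hc, hcl⟩ := rElt_spec T hT hx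
  choose t ht hct using hc
  choose s hs using fun i => QuotientGroup.mk_surjective (t i)
  set H := closure (Set.range fun i => s i * g * (s i)⁻¹)
  have hmapH : H.map π = T ⊔ zpowers (g : G ⧸ center G) := by
    have hπ : π ∘ (fun i => s i * g * (s i)⁻¹) = c := funext fun i => by simp [π, hs, hct]
    rw [MonoidHom.map_closure, ← Set.range_comp, hπ, hcl]
  set N := T.comap π
  have hNH : ⁅N, N⁆ ≤ H := commutator_comap_le_of_le_map (hmapH ▸ le_sup_left)
  have hN : ∃ m ∈ ((⁅N, N⁆ : Subgroup G) : Set G), m ≠ 1 := by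
    simpa using (ne_bot_iff_exists_ne_one.mp
      (commutator_comap_ne_bot (QuotientGroup.mk'_surjective _)
        (commutator_ne_bot_of_centralizer_eq_bot hT)))
  have hNormal : (⁅N, N⁆ : Subgroup G).Normal := commutator_normal N N
  have key := finrank_le_card_mul_of_inf_fixedSubmodule_conj_eq_bot (F := F) (V := V) g s ?_
  · simpa using key
  refine (Submodule.eq_bot_iff _).mpr fun v hv => ?_
  have hHv : H ≤ MulAction.stabilizer G v := by
    refine (closure_le _).mpr ?_
    rintro - ⟨i, rfl⟩
    exact MulAction.mem_stabilizer_iff.mpr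
      (Finset.inf_le (f := fun i => fixedSubmodule F V (s i * g * (s i)⁻¹))
        (Finset.mem_univ i) hv)
  exact eq_zero_of_forall_smul_eq_self hirr (S := ((⁅N, N⁆ : Subgroup G) : Set G))
    (fun a m hm => hNormal.conj_mem m hm a) hN
    fun m hm => MulAction.mem_stabilizer_iff.mp (hHv (hNH hm))

theorem card_pow_finrank_le_card_pow [Finite G] [Finite F] {R : ℕ}
    (hcover : ∀ v : V, ∃ g : G, g ≠ 1 ∧ g • v = v)
    (hfix : ∀ g : G, g ≠ 1 →
      Module.finrank F V ≤ R * (Module.finrank F V - Module.finrank F (fixedSubmodule F V g))) :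
    Nat.card F ^ Module.finrank F V ≤ Nat.card G ^ R := by
  set d := Module.finrank F V
  set q := Nat.card F
  have hq : 0 < q := Nat.card_pos
  obtain ⟨g₁, hg₁⟩ := hcover 0
  have : Nonempty {g : G // g ≠ 1} := ⟨⟨g₁, hg₁.1⟩⟩
  obtain ⟨⟨g₀, hg₀⟩, hmax⟩ :=
    Finite.exists_max fun g : {g : G // g ≠ 1} => Module.finrank F (fixedSubmodule F V (g : G))
  set k := Module.finrank F (fixedSubmodule F V g₀)
  have : Finite V := Module.finite_of_finite F
  have hcount : q ^ d ≤ Nat.card G * q ^ k := by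
    rw [← Module.natCard_eq_pow_finrank]
    refine MulAction.card_le_card_mul_of_forall_exists_fixed hcover fun g hg => ?_
    rw [show Nat.card (MulAction.fixedBy V g) = Nat.card (fixedSubmodule F V g) from rfl,
      Module.natCard_eq_pow_finrank (K := F)]
    exact Nat.pow_le_pow_right hq (hmax ⟨g, hg⟩)
  have hkd : k ≤ d := Submodule.finrank_le _
  have hcodim : q ^ (d - k) ≤ Nat.card G := by
    rw [← Nat.sub_add_cancel hkd, pow_add] at hcount
    exact Nat.le_of_mul_le_mul_right (by simpa using hcount) (Nat.pow_pos hq)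
  calc q ^ d ≤ q ^ (R * (d - k)) := Nat.pow_le_pow_right hq (hfix g₀ hg₀)
    _ = (q ^ (d - k)) ^ R := by rw [← pow_mul, mul_comm]
    _ ≤ Nat.card G ^ R := Nat.pow_le_pow_left hcodim R

end NoRegularOrbit

theorem le_mul_log_div_log_of_pow_le_pow {q n d R : ℕ} (hq : 1 < q) (h : q ^ d ≤ n ^ R) :
    (d : ℝ) ≤ R * (Real.log n / Real.log q) := by
  have hlogq : 0 < Real.log q := Real.log_pos (by exact_mod_cast hq)
  have hlog := Real.log_le_log (by positivity)
    (show ((q ^ d : ℕ) : ℝ) ≤ (n ^ R : ℕ) by exact_mod_cast h)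
  push_cast at hlog
  rw [Real.log_pow, Real.log_pow] at hlog
  rw [← mul_div_assoc, le_div_iff₀ hlogq]
  exact hlog

/-- If an almost quasisimple group `G` (with `T` the socle of `G/Z(G)`: a simple
normal subgroup with trivial centraliser) has no regular orbit on a faithful
irreducible `F_q G`-module `V`, then `dim V ≤ r(G) · log_q |G|`. -/
theorem dim_le_of_no_regular_orbit
    (G : Type*) [Group G] [Finite G] (F : Type*) [Field F] [Fintype F]
    (V : Type*) [AddCommGroup V] [Module F V] [FiniteDimensional F V]
    [DistribMulAction G V] [SMulCommClass G F V] [FaithfulSMul G V]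
    (hirr : ∀ U : Submodule F V, (∀ (g : G) (v : V), v ∈ U → g • v ∈ U) → U = ⊥ ∨ U = ⊤)
    (T : Subgroup (G ⧸ Subgroup.center G)) [T.Normal] [IsSimpleGroup T]
    (hTc : Subgroup.centralizer (T : Set (G ⧸ Subgroup.center G)) = ⊥)
    (hno : ¬ ∃ v : V, ∀ g : G, g • v = v → g = 1) :
    (Module.finrank F V : ℝ) ≤
      (rGroup G T : ℝ) * (Real.log (Nat.card G) / Real.log (Fintype.card F)) := by
  have hcover : ∀ v : V, ∃ g : G, g ≠ 1 ∧ g • v = v := by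
    push Not at hno
    exact fun v => (hno v).imp fun g hg => hg.symm
  obtain ⟨τ, -, hτ⟩ := (nontrivial_iff_exists_ne_one T).mp inferInstance
  obtain ⟨g₀, rfl⟩ := QuotientGroup.mk_surjective τ
  have hg₀ : g₀ ∉ center G := (QuotientGroup.eq_one_iff g₀).not.mp hτ
  have hnoncentral : ∀ g : G, g ∉ center G → Module.finrank F V ≤
      rGroup G T * (Module.finrank F V - Module.finrank F (fixedSubmodule F V g)) := fun g hg =>
    (finrank_le_rElt_mul hirr T hTc hg).trans (Nat.mul_le_mul_right _ (rElt_le_rGroup hTc hg))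
  have hfix : ∀ g : G, g ≠ 1 → Module.finrank F V ≤
      rGroup G T * (Module.finrank F V - Module.finrank F (fixedSubmodule F V g)) := by
    intro g hg
    by_cases hgZ : g ∈ center G
    · rw [fixedSubmodule_eq_bot_of_mem_center hirr hgZ hg, finrank_bot, Nat.sub_zero]
      exact (hnoncentral g₀ hg₀).trans (Nat.mul_le_mul_left _ (Nat.sub_le _ _))
    · exact hnoncentral g hgZ
  rw [Fintype.card_eq_nat_card]
  exact le_mul_log_div_log_of_pow_le_pow Finite.one_lt_card
    (card_pow_finrank_le_card_pow hcover hfix)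
end
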